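/- arXiv:1801.03807 — 2 statements merged into one kernel-verified Lean document; each statement's English description precedes it below -/
import Mathlib

section
/- On the subspace A_z^0, the operators satisfy ∂_{z,0} + ∂_{z,1} + ∂_{1,0} = 0. -/
open scoped BigOperators

/-- Letters: `0 ↦ e₀`, `1 ↦ e₁`, `2 ↦ e_z`. -/
abbrev Letter := Fin 3

/-- The free noncommutative ring `𝒜_z = ℤ⟨e₀, e₁, e_z⟩`. -/
abbrev Az := MonoidAlgebra ℤ (FreeMonoid Letter)

/-- The monomial (word) corresponding to a list of letters. -/
noncomputable def wordOf (l : List Letter) : Az :=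
  MonoidAlgebra.single (FreeMonoid.ofList l) 1

/-- The extended sequence `a₀ = 0, a₁, …, a_n, a_{n+1} = 1`. -/
def ext (a : List Letter) (j : ℕ) : Letter :=
  ((0 : Letter) :: a ++ [1]).getD j 1

/-- `∂_{α,β}` on a word. -/
noncomputable def Dword (α β : Letter) (a : List Letter) : Az :=
  ∑ i ∈ Finset.range a.length,
    (((if ({ext a (i + 1), ext a (i + 2)} : Finset Letter) = {α, β} then 1 else 0)
      - (if ({ext a i, ext a (i + 1)} : Finset Letter) = {α, β} then 1 else 0) : ℤ))
      • wordOf (a.eraseIdx i)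

/-- The linear operator `∂_{α,β} : 𝒜_z → 𝒜_z`. -/
noncomputable def del (α β : Letter) : Az →ₗ[ℤ] Az :=
  (Finsupp.lsum ℤ fun w => LinearMap.toSpanSingleton ℤ Az (Dword α β (FreeMonoid.toList w))) ∘ₗ (MonoidAlgebra.coeffLinearEquiv ℤ).toLinearMap

/-- The shuffle product of two words. -/
noncomputable def shuffleWord : List Letter → List Letter → Az
  | [], v => wordOf v
  | u, [] => wordOf u
  | a :: u, b :: v =>
      wordOf [a] * shuffleWord u (b :: v) + wordOf [b] * shuffleWord (a :: u) v
termination_by u v => u.length + v.length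

/-- The shuffle product as a bilinear map on `𝒜_z`. -/
noncomputable def sh : Az →ₗ[ℤ] Az →ₗ[ℤ] Az :=
  (Finsupp.lsum ℤ fun u => LinearMap.toSpanSingleton ℤ (Az →ₗ[ℤ] Az)
    ((Finsupp.lsum ℤ fun v =>
      LinearMap.toSpanSingleton ℤ Az (shuffleWord (FreeMonoid.toList u) (FreeMonoid.toList v))) ∘ₗ (MonoidAlgebra.coeffLinearEquiv ℤ).toLinearMap)) ∘ₗ (MonoidAlgebra.coeffLinearEquiv ℤ).toLinearMap

/-- The (generalized) stuffle product of two words (the left word should lie in `𝒜`). -/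
noncomputable def stWord : List Letter → List Letter → Az
  | [], v => wordOf v
  | u, [] => wordOf u
  | a :: u, b :: v =>
      if a = 0 then wordOf [0] * stWord u (b :: v)
      else if a = 1 then
        wordOf [b] * (stWord u (b :: v) + stWord (a :: u) v - wordOf [0] * stWord u v)
      else 0
termination_by u v => u.length + v.length

/-- The stuffle product as a bilinear map. -/
noncomputable def st : Az →ₗ[ℤ] Az →ₗ[ℤ] Az :=
  (Finsupp.lsum ℤ fun u => LinearMap.toSpanSingleton ℤ (Az →ₗ[ℤ] Az)
    ((Finsupp.lsum ℤ fun v =>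
      LinearMap.toSpanSingleton ℤ Az (stWord (FreeMonoid.toList u) (FreeMonoid.toList v))) ∘ₗ (MonoidAlgebra.coeffLinearEquiv ℤ).toLinearMap)) ∘ₗ (MonoidAlgebra.coeffLinearEquiv ℤ).toLinearMap

/-- `Const` kills every word containing the letter `e_z`. -/
noncomputable def Const : Az →ₗ[ℤ] Az :=
  (Finsupp.lsum ℤ fun w => LinearMap.toSpanSingleton ℤ Az
    (if (2 : Letter) ∈ FreeMonoid.toList w then 0 else wordOf (FreeMonoid.toList w))) ∘ₗ (MonoidAlgebra.coeffLinearEquiv ℤ).toLinearMap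

/-- `τ_z` on letters. -/
noncomputable def tauLetter (a : Letter) : Az :=
  if a = 0 then wordOf [2] - wordOf [1]
  else if a = 1 then wordOf [2] - wordOf [0]
  else wordOf [2]

/-- `τ_z` on a word (reversing the word). -/
noncomputable def tauWord : List Letter → Az
  | [] => 1
  | a :: u => tauWord u * tauLetter a

/-- The duality anti-automorphism `τ_z`. -/
noncomputable def tau : Az →ₗ[ℤ] Az :=
  (Finsupp.lsum ℤ fun w => LinearMap.toSpanSingleton ℤ Az (tauWord (FreeMonoid.toList w))) ∘ₗ (MonoidAlgebra.coeffLinearEquiv ℤ).toLinearMap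

/-- `𝒜_z^0`: span of the empty word and of words beginning with `e₁` or `e_z`
and ending in `e₀` or `e_z`. -/
noncomputable def Az0 : Submodule ℤ Az :=
  Submodule.span ℤ {x | ∃ l : List Letter,
    (l = [] ∨ (l.head? ≠ some 0 ∧ l.getLast? ≠ some 1)) ∧ x = wordOf l}

/-- `𝒜_z^1`: span of the empty word and of words beginning with `e₁` or `e_z`. -/
noncomputable def Az1 : Submodule ℤ Az :=
  Submodule.span ℤ {x | ∃ l : List Letter, l.head? ≠ some 0 ∧ x = wordOf l}

/-- `𝒜 = ℤ⟨e₀, e₁⟩` inside `𝒜_z`. -/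
noncomputable def Asub : Submodule ℤ Az :=
  Submodule.span ℤ {x | ∃ l : List Letter, (2 : Letter) ∉ l ∧ x = wordOf l}

/-- `𝒜^1 = ℤ ⊕ e₁𝒜`. -/
noncomputable def A1sub : Submodule ℤ Az :=
  Submodule.span ℤ {x | ∃ l : List Letter,
    ((2 : Letter) ∉ l ∧ l.head? ≠ some 0 ∧ l.head? ≠ some 2) ∧ x = wordOf l}

/-- `𝒜^0 = ℤ ⊕ e₁𝒜e₀`. -/
noncomputable def A0sub : Submodule ℤ Az :=
  Submodule.span ℤ {x | ∃ l : List Letter,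
    ((2 : Letter) ∉ l ∧ (l = [] ∨ (l.head? = some 1 ∧ l.getLast? = some 0))) ∧ x = wordOf l}

/-- `𝒜_z^{-2} = ℤ ⊕ e₁𝒜_z e₀ ⊕ e_z 𝒜_z e₀`. -/
noncomputable def Azm2 : Submodule ℤ Az :=
  Submodule.span ℤ {x | ∃ l : List Letter,
    (l = [] ∨ (l.head? ≠ some 0 ∧ l.getLast? = some 0)) ∧ x = wordOf l}

/-- `𝒜_z^0 ∩ ℤ⟨e₁, e_z⟩`. -/
noncomputable def Wsub : Submodule ℤ Az :=
  Submodule.span ℤ {x | ∃ l : List Letter,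
    ((0 : Letter) ∉ l ∧ (l = [] ∨ l.getLast? = some 2)) ∧ x = wordOf l}

/-- `ℤ⟨e_z⟩`: span of powers of `e_z`. -/
noncomputable def Zez : Submodule ℤ Az :=
  Submodule.span ℤ {x | ∃ k : ℕ, x = wordOf (List.replicate k 2)}

/-- `𝒜_z^{-1} = 𝒜_z^{-2}·ℤ⟨e_z⟩`. -/
noncomputable def Azm1 : Submodule ℤ Az :=
  Submodule.span ℤ {x | ∃ l : List Letter, ∃ k : ℕ,
    (l = [] ∨ (l.head? ≠ some 0 ∧ l.getLast? = some 0)) ∧ x = wordOf (l ++ List.replicate k 2)}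

/-- `ℤ⟨e₀, e_z⟩ ∩ 𝒜_z^0`. -/
noncomputable def Vsub : Submodule ℤ Az :=
  Submodule.span ℤ {x | ∃ l : List Letter,
    ((1 : Letter) ∉ l ∧ (l = [] ∨ l.head? = some 2)) ∧ x = wordOf l}

/-- All lists of length `r` with entries in `{e₀, e_z}`. -/
def tuples : ℕ → List (List Letter)
  | 0 => [[]]
  | n + 1 => (tuples n).flatMap fun t => [(0 : Letter) :: t, (2 : Letter) :: t]

/-- `∂_{1,b₁} ∘ ⋯ ∘ ∂_{1,b_r}` for `bs = [b₁, …, b_r]`. -/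
noncomputable def delChain : List Letter → Az →ₗ[ℤ] Az
  | [] => LinearMap.id
  | b :: bs => (del 1 b).comp (delChain bs)

/-- `∂_{z,α₁} ∘ ⋯ ∘ ∂_{z,α_r}` for `as = [α₁, …, α_r]`. -/
noncomputable def delZChain : List Letter → Az →ₗ[ℤ] Az
  | [] => LinearMap.id
  | a :: as => (del 2 a).comp (delZChain as)

/-- `φ_⧢` on a word. -/
noncomputable def phiShWord (l : List Letter) : Az :=
  ∑ r ∈ Finset.range (l.length + 1),
    ((tuples r).map fun b => sh (Const (delChain b (wordOf l))) (wordOf b)).sum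

/-- `φ_⧢ : 𝒜_z^0 → 𝒜_z^0` (defined on all of `𝒜_z`). -/
noncomputable def phiSh : Az →ₗ[ℤ] Az :=
  (Finsupp.lsum ℤ fun w => LinearMap.toSpanSingleton ℤ Az (phiShWord (FreeMonoid.toList w))) ∘ₗ (MonoidAlgebra.coeffLinearEquiv ℤ).toLinearMap

/-- `φ_*` on a word. -/
noncomputable def phiStWord (l : List Letter) : Az :=
  ∑ r ∈ Finset.range (l.length + 1),
    ((tuples r).map fun b => st (Const (delChain b (wordOf l))) (wordOf b)).sum

/-- `φ_* : 𝒜_z^0 → 𝒜_z^0` (defined on all of `𝒜_z`). -/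
noncomputable def phiSt : Az →ₗ[ℤ] Az :=
  (Finsupp.lsum ℤ fun w => LinearMap.toSpanSingleton ℤ Az (phiStWord (FreeMonoid.toList w))) ∘ₗ (MonoidAlgebra.coeffLinearEquiv ℤ).toLinearMap

/-- `φ_⊗` on a word. -/
noncomputable def phiTWord (l : List Letter) : TensorProduct ℤ Az Az :=
  ∑ r ∈ Finset.range (l.length + 1),
    ((tuples r).map fun b => (Const (delChain b (wordOf l))) ⊗ₜ[ℤ] (wordOf b)).sum

/-- `φ_⊗ : 𝒜_z^0 → 𝒜^0 ⊗ ℤ⟨e₀, e_z⟩` (defined on all of `𝒜_z`). -/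
noncomputable def phiT : Az →ₗ[ℤ] TensorProduct ℤ Az Az :=
  (Finsupp.lsum ℤ fun w => LinearMap.toSpanSingleton ℤ (TensorProduct ℤ Az Az)
    (phiTWord (FreeMonoid.toList w))) ∘ₗ (MonoidAlgebra.coeffLinearEquiv ℤ).toLinearMap

/-- The `i`-fold shuffle power of `e₁`. -/
noncomputable def e1pow : ℕ → Az
  | 0 => 1
  | n + 1 => sh (wordOf [1]) (e1pow n)

/-- Substitution `z → 1` on words. -/
noncomputable def subst1 : Az →ₗ[ℤ] Az :=
  (Finsupp.lsum ℤ fun w => LinearMap.toSpanSingleton ℤ Az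
    (wordOf ((FreeMonoid.toList w).map fun a => if a = 2 then 1 else a))) ∘ₗ (MonoidAlgebra.coeffLinearEquiv ℤ).toLinearMap

/-!
Every pair of distinct letters of `{e₀, e₁, e_z}` is one of `{z,0}`, `{z,1}`, `{1,0}`, so in
`∂_{z,0} + ∂_{z,1} + ∂_{1,0}` the coefficient of the word with `a_i` deleted is
`[a_{i-1} = a_i] - [a_i = a_{i+1}]`. Deleting either letter of a repeated pair `a_{i-1} = a_i` gives
the same word, so the sum telescopes to the boundary terms `[a_0 = a_1]` and `[a_n = a_{n+1}]`;
on `𝒜_z^0` both vanish, since `a_1 ≠ e₀ = a_0` and `a_n ≠ e₁ = a_{n+1}`.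
-/

theorem List.eraseIdx_eq_eraseIdx_succ_of_getElem_eq {α : Type*} :
    ∀ (l : List α) (i : ℕ) (h : i + 1 < l.length), l[i] = l[i + 1] →
      l.eraseIdx i = l.eraseIdx (i + 1)
  | _ :: _ :: _, 0, _, he => by simp_all
  | _ :: b :: t, i + 1, h, he => by
      simp only [List.eraseIdx_cons_succ, List.cons.injEq, true_and]
      exact List.eraseIdx_eq_eraseIdx_succ_of_getElem_eq (b :: t) i (by simpa using h) he

lemma del_wordOf (α β : Letter) (l : List Letter) : del α β (wordOf l) = Dword α β l := by
  simp [del, wordOf, MonoidAlgebra.coeffLinearEquiv]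

lemma ext_succ_of_lt {l : List Letter} {j : ℕ} (h : j < l.length) : ext l (j + 1) = l[j] := by
  simp [ext, List.getElem?_append_left h, List.getElem?_eq_getElem h]

lemma ext_length_succ (l : List Letter) : ext l (l.length + 1) = 1 := by
  simp [ext]

lemma pair_indicator_sum (x y : Letter) :
    ((if ({x, y} : Finset Letter) = {2, 0} then 1 else 0) +
      (if ({x, y} : Finset Letter) = {2, 1} then 1 else 0) +
      (if ({x, y} : Finset Letter) = {1, 0} then 1 else 0) : ℤ) =
      1 - if x = y then 1 else 0 := by
  revert x y; decide

def repeatAt (l : List Letter) (j : ℕ) : ℤ := if ext l j = ext l (j + 1) then 1 else 0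

lemma Dword_add_Dword_add_Dword (l : List Letter) :
    Dword 2 0 l + Dword 2 1 l + Dword 1 0 l =
      ∑ i ∈ Finset.range l.length,
        (repeatAt l i - repeatAt l (i + 1)) • wordOf (l.eraseIdx i) := by
  simp only [Dword, ← Finset.sum_add_distrib, ← add_smul]
  refine Finset.sum_congr rfl fun i _ => ?_
  have h₁ := pair_indicator_sum (ext l (i + 1)) (ext l (i + 2))
  have h₂ := pair_indicator_sum (ext l i) (ext l (i + 1))
  simp only [repeatAt]
  congr 1
  linarith

lemma repeatAt_succ_smul_eraseIdx {l : List Letter} {i : ℕ} (hi : i + 1 < l.length) :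
    repeatAt l (i + 1) • wordOf (l.eraseIdx (i + 1)) =
      repeatAt l (i + 1) • wordOf (l.eraseIdx i) := by
  unfold repeatAt
  split_ifs with h
  · rw [ext_succ_of_lt (by omega), ext_succ_of_lt hi] at h
    rw [List.eraseIdx_eq_eraseIdx_succ_of_getElem_eq l i hi h]
  · simp

lemma repeatAt_zero {l : List Letter} (h : l.head? ≠ some 0) : repeatAt l 0 = 0 := by
  cases l with
  | nil => simp [repeatAt, ext]
  | cons a t => simpa [repeatAt, ext, eq_comm] using h

lemma repeatAt_length {l : List Letter} (h : l.getLast? ≠ some 1) :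
    repeatAt l l.length = 0 := by
  rcases List.eq_nil_or_concat l with rfl | ⟨t, a, rfl⟩
  · simp [repeatAt, ext]
  · have ha : a ≠ 1 := by simpa using h
    rw [repeatAt, ext_length_succ, if_neg]
    simpa [ext_succ_of_lt] using ha

lemma Dword_add_Dword_add_Dword_eq_zero {l : List Letter} (h₀ : l.head? ≠ some 0)
    (h₁ : l.getLast? ≠ some 1) : Dword 2 0 l + Dword 2 1 l + Dword 1 0 l = 0 := by
  -- `g j` is the `j`-th term of the telescoping sum; it deletes `a_j`, which is `l[j - 1]`.
  set g : ℕ → Az := fun j => repeatAt l j • wordOf (l.eraseIdx (j - 1))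
  calc Dword 2 0 l + Dword 2 1 l + Dword 1 0 l
      = ∑ i ∈ Finset.range l.length, (g i - g (i + 1)) := by
        rw [Dword_add_Dword_add_Dword]
        refine Finset.sum_congr rfl fun i hi => ?_
        rw [sub_smul]
        congr 1
        cases i with
        | zero => simp [g, repeatAt_zero h₀]
        | succ i => exact repeatAt_succ_smul_eraseIdx (Finset.mem_range.1 hi)
    _ = 0 := by
        rw [Finset.sum_range_sub']
        simp [g, repeatAt_zero h₀, repeatAt_length h₁]

/-- On `𝒜_z^0` we have `∂_{z,0} + ∂_{z,1} + ∂_{1,0} = 0`. -/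
theorem stmt_1 (u : Az) (hu : u ∈ Az0) :
    del 2 0 u + del 2 1 u + del 1 0 u = 0 := by
  suffices Az0 ≤ LinearMap.ker (del 2 0 + del 2 1 + del 1 0) from this hu
  refine Submodule.span_le.2 ?_
  rintro _ ⟨l, hl, rfl⟩
  simp only [SetLike.mem_coe, LinearMap.mem_ker, LinearMap.add_apply, del_wordOf]
  rcases hl with rfl | ⟨h₀, h₁⟩
  · exact Dword_add_Dword_add_Dword_eq_zero (by simp) (by simp)
  · exact Dword_add_Dword_add_Dword_eq_zero h₀ h₁
end

section
/- For c ∈ {0,1}, the operator ∂_{z,c} is a derivation with respect to the shuffle product: for all u,v ∈ A_z, ∂_{z,c}(u ⧢ v) = (∂_{z,c} u) ⧢ v + u ⧢ (∂_{z,c} v). -/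
open scoped BigOperators

/-!
Prepending a letter changes `∂_{α,β}` only at the left boundary: `∂(e_a x) = e_a ∂x + delCorr a x`,
where `delCorr a x` depends only on `a` and the first letter of `x`. Feeding this into the recursion
`e_a u ⧢ e_b v = e_a (u ⧢ e_b v) + e_b (e_a u ⧢ v)`, the derivation rule follows by induction on
the total length of `u` and `v`, once the corrections arising on the two sides are matched
(`delCorr_shuffleWord_left/right`), a direct computation on first letters.
-/

lemma wordOf_nil : wordOf [] = 1 := rfl

lemma wordOf_cons (a : Letter) (l : List Letter) : wordOf (a :: l) = wordOf [a] * wordOf l := by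
  simp [wordOf, MonoidAlgebra.single_mul_single]

lemma lsum_coeff_wordOf {M : Type*} [AddCommGroup M] (F : FreeMonoid Letter → M)
    (l : List Letter) :
    ((Finsupp.lsum ℤ fun w => LinearMap.toSpanSingleton ℤ M (F w)) ∘ₗ
      (MonoidAlgebra.coeffLinearEquiv ℤ).toLinearMap) (wordOf l) = F (FreeMonoid.ofList l) := by
  rw [LinearMap.comp_apply, LinearEquiv.coe_toLinearMap, MonoidAlgebra.coeffLinearEquiv_apply,
    wordOf, MonoidAlgebra.coeff_single, Finsupp.lsum_single, LinearMap.toSpanSingleton_apply_one]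

lemma Az.induction_wordOf {p : Az → Prop} (zero : p 0)
    (smul_wordOf : ∀ (r : ℤ) (l : List Letter), p (r • wordOf l))
    (add : ∀ x y, p x → p y → p (x + y)) (x : Az) : p x := by
  induction x using MonoidAlgebra.induction_linear with
  | zero => exact zero
  | add a b pa pb => exact add _ _ pa pb
  | single a b => simpa [wordOf, MonoidAlgebra.smul_single] using smul_wordOf b a.toList

lemma Az.bilinear_ext {M : Type*} [AddCommGroup M] {f g : Az →ₗ[ℤ] Az →ₗ[ℤ] M}
    (h : ∀ u v, f (wordOf u) (wordOf v) = g (wordOf u) (wordOf v)) : f = g := by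
  ext u v
  simpa [wordOf] using h u.toList v.toList

def pairInd (α β x y : Letter) : ℤ := if ({x, y} : Finset Letter) = {α, β} then 1 else 0

lemma pairInd_comm (α β x y : Letter) : pairInd α β x y = pairInd α β y x := by
  simp [pairInd, Finset.pair_comm]

/-- Freeing the left boundary letter `a₀` makes `Dword` recursive in the word (`DwordFrom_cons`). -/
noncomputable def DwordFrom (α β x : Letter) (a : List Letter) : Az :=
  let e (j : ℕ) : Letter := (x :: a ++ [1]).getD j 1
  ∑ i ∈ Finset.range a.length,
    (pairInd α β (e (i + 1)) (e (i + 2)) - pairInd α β (e i) (e (i + 1))) • wordOf (a.eraseIdx i)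

lemma Dword_eq_DwordFrom (α β : Letter) (a : List Letter) : Dword α β a = DwordFrom α β 0 a := rfl

lemma Dword_nil (α β : Letter) : Dword α β [] = 0 := by simp [Dword]

lemma DwordFrom_cons (α β x a : Letter) (w : List Letter) :
    DwordFrom α β x (a :: w)
      = (pairInd α β a (w.headD 1) - pairInd α β x a) • wordOf w
        + wordOf [a] * DwordFrom α β a w := by
  unfold DwordFrom
  rw [List.length_cons, Finset.sum_range_succ', Finset.mul_sum, add_comm]
  congr 1
  · cases w <;> rfl
  · refine Finset.sum_congr rfl fun i _ => ?_
    simp only [List.cons_append, List.getD_cons_succ, List.eraseIdx_cons_succ]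
    rw [wordOf_cons a (w.eraseIdx i), mul_smul_comm]

noncomputable def delCorrWord (α β a : Letter) : List Letter → Az
  | [] => (pairInd α β a 1 - pairInd α β 0 a) • (1 : Az)
  | h :: t => (pairInd α β a h - pairInd α β 0 a) • wordOf (h :: t)
      + (pairInd α β 0 h - pairInd α β a h) • wordOf (a :: t)

lemma Dword_cons (α β a : Letter) (w : List Letter) :
    Dword α β (a :: w) = wordOf [a] * Dword α β w + delCorrWord α β a w := by
  rw [Dword_eq_DwordFrom, Dword_eq_DwordFrom, DwordFrom_cons]
  cases w with
  | nil => simp [DwordFrom, delCorrWord, wordOf_nil]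
  | cons h t =>
      rw [DwordFrom_cons, DwordFrom_cons, delCorrWord, List.headD_cons, wordOf_cons a t, mul_add,
        mul_add, mul_smul_comm, mul_smul_comm]
      module

noncomputable def delCorr (α β a : Letter) : Az →ₗ[ℤ] Az :=
  (Finsupp.lsum ℤ fun w => LinearMap.toSpanSingleton ℤ Az (delCorrWord α β a w.toList)) ∘ₗ
    (MonoidAlgebra.coeffLinearEquiv ℤ).toLinearMap

lemma delCorr_wordOf (α β a : Letter) (l : List Letter) :
    delCorr α β a (wordOf l) = delCorrWord α β a l :=
  lsum_coeff_wordOf (fun w => delCorrWord α β a w.toList) l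

lemma sh_wordOf (u v : List Letter) : sh (wordOf u) (wordOf v) = shuffleWord u v := by
  rw [sh, lsum_coeff_wordOf]
  exact lsum_coeff_wordOf (fun w => shuffleWord u w.toList) v

lemma del_wordOf_mul (α β a : Letter) (x : Az) :
    del α β (wordOf [a] * x) = wordOf [a] * del α β x + delCorr α β a x := by
  induction x using Az.induction_wordOf with
  | zero => simp
  | add x y hx hy => rw [mul_add, map_add, map_add, map_add, mul_add, hx, hy]; abel
  | smul_wordOf r l =>
      rw [mul_smul_comm, map_smul, map_smul, map_smul, ← wordOf_cons, del_wordOf, del_wordOf,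
        delCorr_wordOf, Dword_cons, smul_add, mul_smul_comm]

lemma delCorr_wordOf_mul (α β a p : Letter) (x : Az) :
    delCorr α β a (wordOf [p] * x)
      = (pairInd α β a p - pairInd α β 0 a) • (wordOf [p] * x)
        + (pairInd α β 0 p - pairInd α β a p) • (wordOf [a] * x) := by
  induction x using Az.induction_wordOf with
  | zero => simp
  | add x y hx hy => simp only [mul_add, map_add, hx, hy, smul_add]; abel
  | smul_wordOf r l =>
      simp only [mul_smul_comm, map_smul, ← wordOf_cons, delCorr_wordOf, delCorrWord]
      module

lemma shuffleWord_nil_left (v : List Letter) : shuffleWord [] v = wordOf v := by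
  rw [shuffleWord]

lemma shuffleWord_nil_right (u : List Letter) : shuffleWord u [] = wordOf u := by
  cases u <;> simp [shuffleWord]

lemma shuffleWord_cons_cons (a b : Letter) (u v : List Letter) :
    shuffleWord (a :: u) (b :: v)
      = wordOf [a] * shuffleWord u (b :: v) + wordOf [b] * shuffleWord (a :: u) v := by
  rw [shuffleWord]

lemma sh_one_left (y : Az) : sh 1 y = y := by
  induction y using Az.induction_wordOf with
  | zero => simp
  | add x y hx hy => rw [map_add, hx, hy]
  | smul_wordOf r l => rw [map_smul, ← wordOf_nil, sh_wordOf, shuffleWord_nil_left]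

lemma sh_one_right (x : Az) : sh x 1 = x := by
  induction x using Az.induction_wordOf with
  | zero => simp
  | add x y hx hy => rw [map_add, LinearMap.add_apply, hx, hy]
  | smul_wordOf r l =>
      rw [map_smul, LinearMap.smul_apply, ← wordOf_nil, sh_wordOf, shuffleWord_nil_right]

lemma sh_wordOf_mul_wordOf_mul (a b : Letter) (x y : Az) :
    sh (wordOf [a] * x) (wordOf [b] * y)
      = wordOf [a] * sh x (wordOf [b] * y) + wordOf [b] * sh (wordOf [a] * x) y := by
  induction x using Az.induction_wordOf with
  | zero => simp
  | add x x' hx hx' => simp only [mul_add, map_add, LinearMap.add_apply, hx, hx']; abel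
  | smul_wordOf r u =>
      induction y using Az.induction_wordOf with
      | zero => simp
      | add y y' hy hy' => simp only [mul_add, map_add, hy, hy']; abel
      | smul_wordOf s v =>
          simp only [mul_smul_comm, map_smul, LinearMap.smul_apply, ← wordOf_cons, sh_wordOf,
            shuffleWord_cons_cons]
          module

lemma delCorr_shuffleWord_left (α β a b : Letter) (u v : List Letter) :
    delCorr α β a (shuffleWord u (b :: v)) + wordOf [b] * sh (delCorrWord α β a u) (wordOf v)
        - sh (delCorrWord α β a u) (wordOf (b :: v))
      = (pairInd α β a b - pairInd α β 0 a) • (wordOf [b] * shuffleWord u v)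
        + (pairInd α β 0 b - pairInd α β a b) • (wordOf [a] * shuffleWord u v) := by
  cases u with
  | nil =>
      rw [shuffleWord_nil_left, shuffleWord_nil_left, delCorr_wordOf]
      simp only [delCorrWord, map_smul, LinearMap.smul_apply, ← wordOf_nil]
      rw [sh_wordOf, sh_wordOf, shuffleWord_nil_left, shuffleWord_nil_left, wordOf_cons b v,
        wordOf_cons a v]
      simp only [mul_smul_comm]
      module
  | cons p u =>
      simp only [shuffleWord_cons_cons, map_add, delCorr_wordOf_mul, delCorrWord, map_smul,
        LinearMap.add_apply, LinearMap.smul_apply, sh_wordOf, mul_add, smul_add, mul_smul_comm]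
      module

lemma delCorr_shuffleWord_right (α β a b : Letter) (u v : List Letter) :
    delCorr α β b (shuffleWord (a :: u) v) + wordOf [a] * sh (wordOf u) (delCorrWord α β b v)
        - sh (wordOf (a :: u)) (delCorrWord α β b v)
      = (pairInd α β a b - pairInd α β 0 b) • (wordOf [a] * shuffleWord u v)
        + (pairInd α β 0 a - pairInd α β a b) • (wordOf [b] * shuffleWord u v) := by
  rw [pairInd_comm α β a b]
  cases v with
  | nil =>
      rw [shuffleWord_nil_right, shuffleWord_nil_right, delCorr_wordOf]
      simp only [delCorrWord, map_smul, ← wordOf_nil, sh_wordOf]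
      rw [shuffleWord_nil_right, shuffleWord_nil_right, wordOf_cons a u, wordOf_cons b u]
      simp only [mul_smul_comm]
      module
  | cons q v =>
      simp only [shuffleWord_cons_cons, map_add, delCorr_wordOf_mul, delCorrWord, map_smul,
        sh_wordOf, mul_add, smul_add, mul_smul_comm]
      module

theorem del_shuffleWord (α β : Letter) : ∀ u v : List Letter,
    del α β (shuffleWord u v) = sh (Dword α β u) (wordOf v) + sh (wordOf u) (Dword α β v)
  | [], v => by
      rw [shuffleWord_nil_left, del_wordOf, Dword_nil, wordOf_nil, sh_one_left, map_zero,
        LinearMap.zero_apply, zero_add]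
  | a :: u, [] => by
      rw [shuffleWord_nil_right, del_wordOf, Dword_nil, wordOf_nil, sh_one_right, map_zero,
        add_zero]
  | a :: u, b :: v => by
      have ih_left := del_shuffleWord α β u (b :: v)
      have ih_right := del_shuffleWord α β (a :: u) v
      have corr_left := delCorr_shuffleWord_left α β a b u v
      have corr_right := delCorr_shuffleWord_right α β a b u v
      rw [shuffleWord_cons_cons, map_add, del_wordOf_mul, del_wordOf_mul, ih_left, ih_right,
        Dword_cons α β a u, Dword_cons α β b v]
      simp only [map_add, LinearMap.add_apply, mul_add]
      rw [wordOf_cons b v] at corr_left ⊢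
      rw [wordOf_cons a u] at corr_right ⊢
      rw [sh_wordOf_mul_wordOf_mul, sh_wordOf_mul_wordOf_mul]
      linear_combination (norm := module) corr_left + corr_right
termination_by u v => u.length + v.length

theorem del_sh (α β : Letter) (u v : Az) :
    del α β (sh u v) = sh (del α β u) v + sh u (del α β v) := by
  refine LinearMap.congr_fun₂
    (f := sh.compr₂ (del α β)) (g := sh.comp (del α β) + sh.compl₂ (del α β)) ?_ u v
  refine Az.bilinear_ext fun u v => ?_
  simp [sh_wordOf, del_wordOf, del_shuffleWord]

theorem stmt_3_general (c : Letter) (u v : Az) :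
    del 2 c (sh u v) = sh (del 2 c u) v + sh u (del 2 c v) :=
  del_sh 2 c u v

/-- For `c ∈ {0,1}`, `∂_{z,c}` is a derivation for the shuffle product. -/
theorem stmt_3 (c : Letter) (hc : c = 0 ∨ c = 1) (u v : Az) :
    del 2 c (sh u v) = sh (del 2 c u) v + sh u (del 2 c v) :=
  stmt_3_general c u v
end
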